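/- Let K, D, λ, m be positive integers with D < K, D + λ dividing K, and λ dividing D; set p = D/λ. Consider the index coding problem with mK messages and antidotes A'_k = {k + iK : 1 ≤ i ≤ m−1} ∪ {k + jλ + iK : 1 ≤ j ≤ p, 0 ≤ i ≤ m−1} ⊆ ZMod (mK) for each k ∈ ZMod (mK). Then the set C^(m) = { Σ_{t=0}^{p} e'_{i+(j+t)λ} : 1 ≤ i ≤ λ, 0 ≤ j ≤ (K−D−λ)/λ }, where e'_l = Σ_{t=0}^{m−1} e_{l+tK} ∈ V_{mK}, is a valid scalar linear index code of length K − D for this problem, and moreover every valid scalar linear index code for this problem has length at least K − D. -/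

import Mathlib

/-!
The code vectors are the windows `∑_{t ≤ p} e'_{i+(s+t)λ}` with `s ≤ (K-D-λ)/λ`. Since `e'` is
`K`-periodic and `K = M (p+1) λ`, the `M` windows tiling a period always sum to the same vector,
wherever the tiling starts; this expresses every window through the code vectors. Receiver `k`
takes the window starting at `k` and removes `e'_{k+tλ}` (`1 ≤ t ≤ p`) and `e_{k+iK}` (`i ≥ 1`),
which its side information provides.

For the lower bound, receiver `a < K - D` knows none of the messages `b ≤ a`, so any code spans
vectors whose restrictions to the coordinates `0, …, K-D-1` form a unitriangular matrix.
-/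

/-- Standard basis vector `e_j` of `V_n = ZMod n → GF(2)`. -/
def stdVec (n : ℕ) (j : ZMod n) : ZMod n → ZMod 2 := fun i => if i = j then 1 else 0

/-- `C` is a valid scalar linear index code over `GF(2)` for the index coding problem
with `n` messages and antidote pattern `A`. -/
def IsIndexCode (n : ℕ) (A : ZMod n → Set (ZMod n)) (C : Set (ZMod n → ZMod 2)) : Prop :=
  C.Finite ∧ ∀ k : ZMod n,
    stdVec n k ∈ Submodule.span (ZMod 2) (C ∪ (stdVec n '' A k))

/-- `e'_l = Σ_{t=0}^{m-1} e_{l+tK} ∈ V_{mK}`. -/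
def eSum (K m : ℕ) (l : ℕ) : ZMod (m * K) → ZMod 2 :=
  ∑ t ∈ Finset.range m, stdVec (m * K) ((l + t * K : ℕ))

open Finset Function

section PeriodicWindows

variable {V : Type*} [AddCommGroup V]

theorem Function.Periodic.sum_range_add_left {f : ℕ → V} {T : ℕ} (hf : Periodic f T) (b : ℕ) :
    ∑ r ∈ range T, f (b + r) = ∑ r ∈ range T, f r := by
  induction b with
  | zero => simp
  | succ b ih =>
    have h := sum_range_succ' (fun r => f (b + r)) T
    rw [sum_range_succ, add_zero, hf b, add_left_inj] at h
    rw [← ih, h]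
    exact sum_congr rfl fun r _ => by rw [add_right_comm, add_assoc]

theorem sum_range_mul_eq_sum_sum {β : Type*} [AddCommMonoid β] (g : ℕ → β) (a c : ℕ) :
    ∑ r ∈ range (a * c), g r = ∑ u ∈ range a, ∑ t ∈ range c, g (u * c + t) := by
  induction a with
  | zero => simp
  | succ a ih => rw [sum_range_succ, ← ih, add_mul, one_mul, sum_range_add]

/-- Up to periodicity, the only other windows start at `M * c + b` with `0 < b < c`; such a window
is the sum of the `M + 1` windows tiling a period from `0` minus the other `M` windows of the
tiling from `b`. -/
theorem Function.Periodic.window_mem {f : ℕ → V} {M c : ℕ} (hf : Periodic f ((M + 1) * c))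
    {P : AddSubgroup V} (hP : ∀ j ≤ M * c, ∑ t ∈ range c, f (j + t) ∈ P) (s : ℕ) :
    ∑ t ∈ range c, f (s + t) ∈ P := by
  set W : ℕ → V := fun s => ∑ t ∈ range c, f (s + t) with hWdef
  have hW : Periodic W ((M + 1) * c) := fun s =>
    sum_congr rfl fun t _ => by rw [add_right_comm]; exact hf _
  have htiling : ∀ b, ∑ u ∈ range (M + 1), W (b + u * c) = ∑ r ∈ range ((M + 1) * c), f r :=
    fun b => by
      rw [← hf.sum_range_add_left b, sum_range_mul_eq_sum_sum]
      simp only [hWdef, add_assoc]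
  rcases Nat.eq_zero_or_pos c with rfl | hc
  · simp [P.zero_mem]
  change W s ∈ P
  rw [← hW.map_mod_nat s]
  set r := s % ((M + 1) * c)
  have hlt : r < M * c + c := by rw [← add_one_mul]; exact Nat.mod_lt _ (by positivity)
  by_cases hle : r ≤ M * c
  · exact hP r hle
  obtain ⟨b, hb, hbr⟩ : ∃ b < c, r = b + M * c := ⟨r - M * c, by omega, by omega⟩
  have hsplit := htiling b
  rw [sum_range_succ, ← htiling 0, ← hbr] at hsplit
  rw [eq_sub_of_add_eq' hsplit]
  refine P.sub_mem (P.sum_mem fun u hu => hP _ ?_) (P.sum_mem fun u hu => hP _ ?_)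
  · simpa using Nat.mul_le_mul_right c (Nat.lt_succ_iff.mp (mem_range.mp hu))
  · have := Nat.mul_le_mul_right c (show u + 1 ≤ M from mem_range.mp hu)
    rw [add_one_mul] at this
    omega

end PeriodicWindows

section IndexCode

variable {n : ℕ} {A : ZMod n → Set (ZMod n)} {C : Set (ZMod n → ZMod 2)}

theorem apply_eq_zero_of_mem_span_stdVec_image {S : Set (ZMod n)} {z : ZMod n → ZMod 2}
    (hz : z ∈ Submodule.span (ZMod 2) (stdVec n '' S)) {x : ZMod n} (hx : x ∉ S) : z x = 0 := by
  have hker : Submodule.span (ZMod 2) (stdVec n '' S) ≤ LinearMap.ker (LinearMap.proj x) := by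
    rw [Submodule.span_le]
    rintro _ ⟨j, hj, rfl⟩
    simp [stdVec, show x ≠ j from fun h => hx (h ▸ hj)]
  simpa using hker hz

theorem IsIndexCode.exists_mem_span_eqOn_compl (hC : IsIndexCode n A C) (k : ZMod n) :
    ∃ u ∈ Submodule.span (ZMod 2) C, ∀ x ∉ A k, u x = stdVec n k x := by
  have hk := hC.2 k
  rw [Submodule.span_union] at hk
  obtain ⟨u, hu, z, hz, huz⟩ := Submodule.mem_sup.mp hk
  refine ⟨u, hu, fun x hx => ?_⟩
  rw [← huz, Pi.add_apply, apply_eq_zero_of_mem_span_stdVec_image hz hx, add_zero]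

/-- The decoding vectors of the receivers `s a`, restricted to the coordinates `s b`, form a
unitriangular matrix. -/
theorem IsIndexCode.card_le_ncard {ι : Type*} [Fintype ι] [LinearOrder ι]
    (hC : IsIndexCode n A C) {s : ι → ZMod n} (hs : Injective s)
    (hsA : ∀ ⦃a b⦄, b ≤ a → s b ∉ A (s a)) : Fintype.card ι ≤ C.ncard := by
  choose u hu hu_eq using fun a => hC.exists_mem_span_eqOn_compl (s a)
  let T : Matrix ι ι (ZMod 2) := fun a b => u a (s b)
  have hT : T.IsUpperTriangular := fun a b hba => by
    have hba : b < a := hba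
    simp only [T, hu_eq a (s b) (hsA hba.le), stdVec, hs.ne hba.ne, if_false]
  have hdet : T.det ≠ 0 := by
    simp [Matrix.det_of_isUpperTriangular hT, T, hu_eq _ _ (hsA le_rfl), stdVec]
  have hli : LinearIndependent (ZMod 2) fun a => (⟨u a, hu a⟩ : Submodule.span (ZMod 2) C) :=
    LinearIndependent.of_comp ((LinearMap.funLeft (ZMod 2) (ZMod 2) s).comp (Submodule.subtype _))
      (Matrix.linearIndependent_rows_of_det_ne_zero hdet)
  have := hC.1.fintype
  have : FiniteDimensional (ZMod 2) (Submodule.span (ZMod 2) C) :=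
    FiniteDimensional.span_of_finite _ hC.1
  calc Fintype.card ι ≤ Module.finrank (ZMod 2) (Submodule.span (ZMod 2) C) :=
        hli.fintype_card_le_finrank
    _ ≤ C.toFinset.card := finrank_span_le_card C
    _ = C.ncard := (Set.ncard_eq_toFinset_card' C).symm

end IndexCode

theorem ZMod.natCast_ne_add_natCast {n a b c : ℕ} (hba : b ≤ a) (hc : 0 < c) (hn : a + c < n) :
    (b : ZMod n) ≠ a + c := by
  rw [← Nat.cast_add]
  intro h
  have := congrArg ZMod.val h
  rw [ZMod.val_cast_of_lt (by omega), ZMod.val_cast_of_lt hn] at this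
  omega

section LiftedProblem

theorem eSum_periodic (K m : ℕ) : Periodic (eSum K m) K := fun l => by
  have hstd : Periodic (fun t => stdVec (m * K) ((l + t * K : ℕ))) m := fun t => by
    dsimp only
    rw [add_mul, ← add_assoc, Nat.cast_add _ (m * K), ZMod.natCast_self, add_zero]
  unfold eSum
  rw [← hstd.sum_range_add_left 1]
  exact sum_congr rfl fun t _ => by rw [show l + K + t * K = l + (1 + t) * K by ring]

def liftedAntidote (K D lam m : ℕ) (k : ZMod (m * K)) : Set (ZMod (m * K)) :=
  {x | ∃ i : ℕ, 1 ≤ i ∧ i ≤ m - 1 ∧ x = k + (i * K : ℕ)} ∪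
    {x | ∃ j i : ℕ, 1 ≤ j ∧ j ≤ D / lam ∧ i ≤ m - 1 ∧ x = k + (j * lam + i * K : ℕ)}

def liftedCode (K D lam m : ℕ) : Set (ZMod (m * K) → ZMod 2) :=
  {v | ∃ i j : ℕ, 1 ≤ i ∧ i ≤ lam ∧ j ≤ (K - D - lam) / lam ∧
    v = ∑ t ∈ range (D / lam + 1), eSum K m (i + (j + t) * lam)}

variable {K D lam m : ℕ}

theorem exists_eq_succ_mul_of_dvd (hK : 0 < K) (hlam : 0 < lam) (hdvd1 : D + lam ∣ K)
    (hdvd2 : lam ∣ D) :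
    ∃ M, K = (M + 1) * (D / lam + 1) * lam ∧ (K - D - lam) / lam = M * (D / lam + 1) := by
  obtain ⟨M, rfl⟩ := hdvd1
  obtain ⟨M, rfl⟩ : ∃ M', M = M' + 1 := Nat.exists_eq_succ_of_ne_zero (by rintro rfl; simp at hK)
  obtain ⟨p, rfl⟩ := hdvd2
  rw [Nat.mul_div_cancel_left p hlam]
  refine ⟨M, by ring, Nat.div_eq_of_eq_mul_left hlam ?_⟩
  have : (lam * p + lam) * (M + 1) = M * (p + 1) * lam + lam * p + lam := by ring
  omega

theorem window_mem_span_liftedCode (hK : 0 < K) (hlam : 0 < lam) (hdvd1 : D + lam ∣ K)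
    (hdvd2 : lam ∣ D) {l : ℕ} (hl : 1 ≤ l) :
    ∑ t ∈ range (D / lam + 1), eSum K m (l + t * lam) ∈
      Submodule.span (ZMod 2) (liftedCode K D lam m) := by
  obtain ⟨M, hKM, hq⟩ := exists_eq_succ_mul_of_dvd hK hlam hdvd1 hdvd2
  obtain ⟨i, s, hi1, hi2, hl⟩ : ∃ i s, 1 ≤ i ∧ i ≤ lam ∧ l = i + s * lam :=
    ⟨(l - 1) % lam + 1, (l - 1) / lam, le_add_self, Nat.mod_lt _ hlam,
      by have := Nat.mod_add_div' (l - 1) lam; omega⟩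
  have hper : Periodic (fun r => eSum K m (i + r * lam)) ((M + 1) * (D / lam + 1)) := fun r => by
    dsimp only
    rw [add_mul, ← add_assoc, ← hKM, eSum_periodic K m _]
  simp_rw [hl, add_assoc, ← add_mul]
  exact hper.window_mem (P := (Submodule.span (ZMod 2) (liftedCode K D lam m)).toAddSubgroup)
    (fun j hj => Submodule.subset_span ⟨i, j, hi1, hi2, hq ▸ hj, rfl⟩) s

theorem stdVec_mem_span_liftedCode_union (hK : 0 < K) (hlam : 0 < lam) (hm : 0 < m)
    (hdvd1 : D + lam ∣ K) (hdvd2 : lam ∣ D) (k : ZMod (m * K)) :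
    stdVec (m * K) k ∈ Submodule.span (ZMod 2)
      (liftedCode K D lam m ∪ stdVec (m * K) '' liftedAntidote K D lam m k) := by
  have : NeZero (m * K) := ⟨(Nat.mul_pos hm hK).ne'⟩
  set P := Submodule.span (ZMod 2)
    (liftedCode K D lam m ∪ stdVec (m * K) '' liftedAntidote K D lam m k)
  have hside : ∀ c : ℕ, k + (c : ZMod (m * K)) ∈ liftedAntidote K D lam m k →
      stdVec (m * K) ((k.val + c : ℕ)) ∈ P := fun c hc => by
    rw [Nat.cast_add, ZMod.natCast_zmod_val]
    exact Submodule.subset_span (Or.inr ⟨_, hc, rfl⟩)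
  have hwindow : ∑ t ∈ range (D / lam + 1), eSum K m (k.val + t * lam) ∈ P := by
    have := window_mem_span_liftedCode (m := m) hK hlam hdvd1 hdvd2 (l := k.val + K) (by omega)
    simp_rw [add_right_comm _ K, eSum_periodic K m _] at this
    exact Submodule.span_mono Set.subset_union_left this
  have hnear : ∀ t ∈ range (D / lam), eSum K m (k.val + (t + 1) * lam) ∈ P := fun t ht =>
    Submodule.sum_mem _ fun u hu => by
      rw [add_assoc]
      exact hside _ (Or.inr ⟨t + 1, u, by omega, mem_range.mp ht,
        Nat.le_sub_one_of_lt (mem_range.mp hu), rfl⟩)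
  have hself : eSum K m k.val - stdVec (m * K) k ∈ P := by
    rw [eSum, ← add_sum_erase _ _ (mem_range.mpr hm), zero_mul, add_zero, ZMod.natCast_zmod_val,
      add_sub_cancel_left]
    refine Submodule.sum_mem _ fun u hu => hside _ (Or.inl ⟨u, ?_, ?_, rfl⟩)
    · exact Nat.one_le_iff_ne_zero.mpr (ne_of_mem_erase hu)
    · exact Nat.le_sub_one_of_lt (mem_range.mp (mem_of_mem_erase hu))
  have hdecomp : stdVec (m * K) k = ∑ t ∈ range (D / lam + 1), eSum K m (k.val + t * lam)
      - ∑ t ∈ range (D / lam), eSum K m (k.val + (t + 1) * lam)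
      - (eSum K m k.val - stdVec (m * K) k) := by
    rw [sum_range_succ', zero_mul, add_zero]
    abel
  rw [hdecomp]
  exact P.sub_mem (P.sub_mem hwindow (Submodule.sum_mem _ hnear)) hself

theorem liftedCode_eq_image : liftedCode K D lam m =
    (fun ij : ℕ × ℕ => ∑ t ∈ range (D / lam + 1), eSum K m (ij.1 + (ij.2 + t) * lam)) ''
      Set.Icc 1 lam ×ˢ Set.Iic ((K - D - lam) / lam) := by
  ext v
  constructor
  · rintro ⟨i, j, hi1, hi2, hj, rfl⟩
    exact ⟨(i, j), ⟨⟨hi1, hi2⟩, hj⟩, rfl⟩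
  · rintro ⟨⟨i, j⟩, ⟨⟨hi1, hi2⟩, hj⟩, rfl⟩
    exact ⟨i, j, hi1, hi2, hj, rfl⟩

theorem liftedCode_finite : (liftedCode K D lam m).Finite :=
  liftedCode_eq_image ▸ ((Set.finite_Icc _ _).prod (Set.finite_Iic _)).image _

theorem liftedCode_isIndexCode (hK : 0 < K) (hlam : 0 < lam) (hm : 0 < m)
    (hdvd1 : D + lam ∣ K) (hdvd2 : lam ∣ D) :
    IsIndexCode (m * K) (liftedAntidote K D lam m) (liftedCode K D lam m) :=
  ⟨liftedCode_finite, stdVec_mem_span_liftedCode_union hK hlam hm hdvd1 hdvd2⟩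

theorem ncard_liftedCode_le (hK : 0 < K) (hlam : 0 < lam) (hdvd1 : D + lam ∣ K)
    (hdvd2 : lam ∣ D) : (liftedCode K D lam m).ncard ≤ K - D := by
  obtain ⟨M, hKM, hq⟩ := exists_eq_succ_mul_of_dvd hK hlam hdvd1 hdvd2
  rw [liftedCode_eq_image]
  refine (Set.ncard_image_le ((Set.finite_Icc _ _).prod (Set.finite_Iic _))).trans ?_
  rw [Set.ncard_prod, Set.ncard_Icc_nat, Set.ncard_Iic_nat, Nat.add_sub_cancel, hq]
  have hD : D / lam * lam = D := Nat.div_mul_cancel hdvd2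
  have : (M + 1) * (D / lam + 1) * lam = lam * (M * (D / lam + 1) + 1) + D / lam * lam := by ring
  omega

theorem natCast_notMem_liftedAntidote (hm : 0 < m) {a b : ℕ} (hba : b ≤ a) (ha : a < K - D) :
    (b : ZMod (m * K)) ∉ liftedAntidote K D lam m a := by
  have hmK : (m - 1) * K + K = m * K := by
    rw [← add_one_mul, Nat.sub_add_cancel (show 1 ≤ m from hm)]
  rintro (⟨i, hi1, hi2, hb⟩ | ⟨j, i, hj1, hj2, hi, hb⟩)
  · have := Nat.mul_le_mul_right K hi2
    exact ZMod.natCast_ne_add_natCast hba (Nat.mul_pos hi1 (by omega)) (by omega) hb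
  · have hlam : 0 < lam := Nat.pos_of_ne_zero (by rintro rfl; simp at hj2; omega)
    have := Nat.mul_le_mul_right K hi
    have := (Nat.mul_le_mul_right lam hj2).trans (Nat.div_mul_le_self D lam)
    exact ZMod.natCast_ne_add_natCast hba (by positivity) (by omega) hb

theorem sub_le_ncard_of_isIndexCode_liftedAntidote (hm : 0 < m) {C : Set (ZMod (m * K) → ZMod 2)}
    (hC : IsIndexCode (m * K) (liftedAntidote K D lam m) C) : K - D ≤ C.ncard := by
  have hKD : K - D ≤ m * K := (Nat.sub_le K D).trans (Nat.le_mul_of_pos_left K hm)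
  have hinj : Injective fun a : Fin (K - D) => ((a : ℕ) : ZMod (m * K)) := fun a b h => by
    have := congrArg ZMod.val h
    simp only [ZMod.val_cast_of_lt (a.2.trans_le hKD), ZMod.val_cast_of_lt (b.2.trans_le hKD)]
      at this
    exact Fin.ext this
  simpa using hC.card_le_ncard hinj fun a b hba => natCast_notMem_liftedAntidote hm hba a.2

end LiftedProblem

theorem lifted_code_class_iii_general (K D lam m : ℕ) (hK : 0 < K)
    (hlam : 0 < lam) (hm : 0 < m)
    (hdvd1 : (D + lam) ∣ K) (hdvd2 : lam ∣ D) :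
    (IsIndexCode (m * K)
        (fun k => {x | ∃ i : ℕ, 1 ≤ i ∧ i ≤ m - 1 ∧ x = k + (i * K : ℕ)} ∪
          {x | ∃ j i : ℕ, 1 ≤ j ∧ j ≤ D / lam ∧ i ≤ m - 1 ∧
            x = k + (j * lam + i * K : ℕ)})
        {v | ∃ i j : ℕ, 1 ≤ i ∧ i ≤ lam ∧ j ≤ (K - D - lam) / lam ∧
          v = ∑ t ∈ Finset.range (D / lam + 1), eSum K m (i + (j + t) * lam)} ∧
      ({v | ∃ i j : ℕ, 1 ≤ i ∧ i ≤ lam ∧ j ≤ (K - D - lam) / lam ∧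
          v = ∑ t ∈ Finset.range (D / lam + 1), eSum K m (i + (j + t) * lam)} :
        Set (ZMod (m * K) → ZMod 2)).ncard = K - D) ∧
    (∀ C' : Set (ZMod (m * K) → ZMod 2),
      IsIndexCode (m * K)
        (fun k => {x | ∃ i : ℕ, 1 ≤ i ∧ i ≤ m - 1 ∧ x = k + (i * K : ℕ)} ∪
          {x | ∃ j i : ℕ, 1 ≤ j ∧ j ≤ D / lam ∧ i ≤ m - 1 ∧
            x = k + (j * lam + i * K : ℕ)}) C' →
        K - D ≤ C'.ncard) := by
  have hcode := liftedCode_isIndexCode hK hlam hm hdvd1 hdvd2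
  have hlower : ∀ C, IsIndexCode (m * K) (liftedAntidote K D lam m) C → K - D ≤ C.ncard :=
    fun _ => sub_le_ncard_of_isIndexCode_liftedAntidote hm
  exact ⟨⟨hcode, (ncard_liftedCode_le hK hlam hdvd1 hdvd2).antisymm (hlower _ hcode)⟩, hlower⟩

/-- **Class (iii) lifted (Corollary 6).** For `D + λ ∣ K`, `λ ∣ D`, `D < K` and
`p = D/λ`, the lifted code `{Σ_{t=0}^{p} e'_{i+(j+t)λ} : 1 ≤ i ≤ λ, 0 ≤ j ≤ (K-D-λ)/λ}`
is a valid scalar linear index code of optimal length `K - D` for the lifted problem on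
`m*K` messages with antidotes
`{k+iK : 1 ≤ i ≤ m-1} ∪ {k+jλ+iK : 1 ≤ j ≤ p, 0 ≤ i ≤ m-1}`. -/
theorem lifted_code_class_iii (K D lam m : ℕ) (hK : 0 < K) (hD : 0 < D)
    (hlam : 0 < lam) (hm : 0 < m) (hDK : D < K)
    (hdvd1 : (D + lam) ∣ K) (hdvd2 : lam ∣ D) :
    (IsIndexCode (m * K)
        (fun k => {x | ∃ i : ℕ, 1 ≤ i ∧ i ≤ m - 1 ∧ x = k + (i * K : ℕ)} ∪
          {x | ∃ j i : ℕ, 1 ≤ j ∧ j ≤ D / lam ∧ i ≤ m - 1 ∧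
            x = k + (j * lam + i * K : ℕ)})
        {v | ∃ i j : ℕ, 1 ≤ i ∧ i ≤ lam ∧ j ≤ (K - D - lam) / lam ∧
          v = ∑ t ∈ Finset.range (D / lam + 1), eSum K m (i + (j + t) * lam)} ∧
      ({v | ∃ i j : ℕ, 1 ≤ i ∧ i ≤ lam ∧ j ≤ (K - D - lam) / lam ∧
          v = ∑ t ∈ Finset.range (D / lam + 1), eSum K m (i + (j + t) * lam)} :
        Set (ZMod (m * K) → ZMod 2)).ncard = K - D) ∧
    (∀ C' : Set (ZMod (m * K) → ZMod 2),
      IsIndexCode (m * K)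
        (fun k => {x | ∃ i : ℕ, 1 ≤ i ∧ i ≤ m - 1 ∧ x = k + (i * K : ℕ)} ∪
          {x | ∃ j i : ℕ, 1 ≤ j ∧ j ≤ D / lam ∧ i ≤ m - 1 ∧
            x = k + (j * lam + i * K : ℕ)}) C' →
        K - D ≤ C'.ncard) :=
  lifted_code_class_iii_general K D lam m hK hlam hm hdvd1 hdvd2
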